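/- arXiv:2311.05381 — 4 statements merged into one kernel-verified Lean document; each statement's English description precedes it below -/
import Mathlib

section
/- Let (C_i)_{i=1}^m be nonempty closed convex subsets of H, let 𝐱 ∈ ∏_i C_i, set 𝐲 = Proj_D(𝐱) and 𝐩 = Proj_{∏_i C_i}(𝐲). Then Σ_i ω_i dist²_{C_i}(A𝐱) = dist_D²(𝐱) − ‖𝐱 − 𝐩‖² + 2⟨𝐱 − 𝐩, 𝐲 − 𝐩⟩, where ⟨𝐱 − 𝐩, 𝐲 − 𝐩⟩ ≤ 0. In particular, 0 ≤ Σ_i ω_i dist²_{C_i}(A𝐱) ≤ dist_D²(𝐱). -/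
open Filter Topology Metric

noncomputable def avgW {H : Type*} [NormedAddCommGroup H] [InnerProductSpace ℝ H]
    {m : ℕ} (ω : Fin m → ℝ) (x : Fin m → H) : H := ∑ i, ω i • x i

noncomputable def wInner {H : Type*} [NormedAddCommGroup H] [InnerProductSpace ℝ H]
    {m : ℕ} (ω : Fin m → ℝ) (x y : Fin m → H) : ℝ := ∑ i, ω i * (inner ℝ (x i) (y i) : ℝ)

noncomputable def wNormSq {H : Type*} [NormedAddCommGroup H] [InnerProductSpace ℝ H]
    {m : ℕ} (ω : Fin m → ℝ) (x : Fin m → H) : ℝ := ∑ i, ω i * ‖x i‖ ^ 2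

/-- Squared distance (in the weighted product norm) to the diagonal subspace
`D = {(z,...,z) : z ∈ H}`. -/
noncomputable def distDsq {H : Type*} [NormedAddCommGroup H] [InnerProductSpace ℝ H]
    {m : ℕ} (ω : Fin m → ℝ) (x : Fin m → H) : ℝ :=
  (⨅ z : H, Real.sqrt (wNormSq ω (fun i => x i - z))) ^ 2

/-- The Cartesian product `∏ᵢ Cᵢ` viewed inside the product space `H^m`. -/
def prodSet {H : Type*} {m : ℕ} (C : Fin m → Set H) : Set (Fin m → H) := {x | ∀ i, x i ∈ C i}

/-- The diagonal subspace of `H^m`. -/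
def diagSet (H : Type*) (m : ℕ) : Set (Fin m → H) := {x | ∀ i j, x i = x j}

lemma key_identity {H : Type*} [NormedAddCommGroup H] [InnerProductSpace ℝ H]
    (u v w : H) :
    ‖w - v‖ ^ 2 = ‖u - w‖ ^ 2 - ‖u - v‖ ^ 2 + 2 * (inner ℝ (u - v) (w - v) : ℝ) := by
  have h1 : w - v = (u - v) - (u - w) := by abel
  have h2 : (inner ℝ (u - v) u : ℝ) - inner ℝ (u - v) v = ‖u - v‖ ^ 2 := by
    rw [← inner_sub_right, real_inner_self_eq_norm_sq]
  rw [h1, @norm_sub_sq_real]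
  simp only [inner_sub_right]
  linarith

lemma distDsq_eq {H : Type*} [NormedAddCommGroup H] [InnerProductSpace ℝ H]
    {m : ℕ} (ω : Fin m → ℝ) (hω : ∀ i, 0 < ω i) (hωsum : ∑ i, ω i = 1)
    (x : Fin m → H) :
    distDsq ω x = wNormSq ω (fun i => x i - avgW ω x) := by
  set a := avgW ω x with ha
  have hnn : ∀ (y : Fin m → H), 0 ≤ wNormSq ω y := fun y =>
    Finset.sum_nonneg fun i _ => mul_nonneg (hω i).le (sq_nonneg _)
  have hvar : ∀ z : H, wNormSq ω (fun i => x i - z)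
      = wNormSq ω (fun i => x i - a) + ‖a - z‖ ^ 2 := by
    intro z
    have hsplit : ∀ i : Fin m, x i - z = (x i - a) + (a - z) := fun i => by abel
    have hcross : ∑ i, ω i * (inner ℝ (x i - a) (a - z) : ℝ) = 0 := by
      have : ∑ i, ω i * (inner ℝ (x i - a) (a - z) : ℝ)
          = (inner ℝ (∑ i, ω i • (x i - a)) (a - z) : ℝ) := by
        rw [sum_inner]
        exact Finset.sum_congr rfl fun i _ => (real_inner_smul_left _ _ _).symm
      rw [this]
      have hzero : ∑ i, ω i • (x i - a) = 0 := by
        simp only [smul_sub, Finset.sum_sub_distrib, ← Finset.sum_smul, hωsum, one_smul, ha,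
          avgW, sub_self]
      rw [hzero, inner_zero_left]
    simp only [wNormSq, hsplit]
    have : ∀ i : Fin m, ω i * ‖(x i - a) + (a - z)‖ ^ 2
        = ω i * ‖x i - a‖ ^ 2 + 2 * (ω i * (inner ℝ (x i - a) (a - z) : ℝ)) + ω i * ‖a - z‖ ^ 2 := by
      intro i
      rw [@norm_add_sq_real]
      ring
    rw [Finset.sum_congr rfl fun i _ => this i]
    rw [Finset.sum_add_distrib, Finset.sum_add_distrib, ← Finset.mul_sum, ← Finset.sum_mul,
      hcross, hωsum]
    ring
  have hinf : (⨅ z : H, Real.sqrt (wNormSq ω (fun i => x i - z)))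
      = Real.sqrt (wNormSq ω (fun i => x i - a)) := by
    apply le_antisymm
    · have := ciInf_le (f := fun z : H => Real.sqrt (wNormSq ω (fun i => x i - z)))
        ⟨0, fun r ⟨z, hz⟩ => hz ▸ Real.sqrt_nonneg _⟩ a
      exact this
    · apply le_ciInf
      intro z
      apply Real.sqrt_le_sqrt
      rw [hvar z]
      nlinarith [sq_nonneg ‖a - z‖]
  rw [distDsq, hinf, Real.sq_sqrt (hnn _)]

/-- Corollary 2.5: for `𝐱 ∈ ∏ᵢ Cᵢ`, `𝐲 = Proj_D 𝐱 = (A𝐱,…,A𝐱)` and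
`𝐩 = Proj_{∏ᵢCᵢ}(𝐲) = (Proj_{C₁}(A𝐱),…,Proj_{C_m}(A𝐱))`, one has
`d(𝐱) = dist_D²(𝐱) − ‖𝐱 − 𝐩‖² + 2⟨𝐱 − 𝐩, 𝐲 − 𝐩⟩` with `⟨𝐱 − 𝐩, 𝐲 − 𝐩⟩ ≤ 0`;
in particular `0 ≤ d(𝐱) ≤ dist_D²(𝐱)`. -/
theorem d_le_distDsq {H : Type*} [NormedAddCommGroup H] [InnerProductSpace ℝ H]
    [CompleteSpace H] {m : ℕ} (ω : Fin m → ℝ) (hω : ∀ i, 0 < ω i)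
    (hωsum : ∑ i, ω i = 1)
    (C : Fin m → Set H) (hCne : ∀ i, (C i).Nonempty)
    (hCcl : ∀ i, IsClosed (C i)) (hCv : ∀ i, Convex ℝ (C i))
    (x : Fin m → H) (hx : x ∈ prodSet C)
    (p : Fin m → H)
    (hp : ∀ i, p i ∈ C i ∧ dist (avgW ω x) (p i) = Metric.infDist (avgW ω x) (C i)) :
    (∑ i, ω i * Metric.infDist (avgW ω x) (C i) ^ 2
      = distDsq ω x - wNormSq ω (fun i => x i - p i)
        + 2 * wInner ω (fun i => x i - p i) (fun i => avgW ω x - p i)) ∧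
    wInner ω (fun i => x i - p i) (fun i => avgW ω x - p i) ≤ 0 ∧
    0 ≤ ∑ i, ω i * Metric.infDist (avgW ω x) (C i) ^ 2 ∧
    ∑ i, ω i * Metric.infDist (avgW ω x) (C i) ^ 2 ≤ distDsq ω x := by
  set a := avgW ω x with ha
  have hdist : ∀ i, Metric.infDist a (C i) = ‖a - p i‖ := by
    intro i
    rw [← (hp i).2, dist_eq_norm]
  have hip : ∀ i : Fin m, (inner ℝ (x i - p i) (a - p i) : ℝ) ≤ 0 := by
    intro i
    haveI : Nonempty (C i) := ⟨⟨p i, (hp i).1⟩⟩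
    have hinf : ‖a - p i‖ = ⨅ w : C i, ‖a - w‖ := by
      rw [← hdist i, Metric.infDist_eq_iInf]
      exact iInf_congr fun w => dist_eq_norm _ _
    have := (norm_eq_iInf_iff_real_inner_le_zero (hCv i) (hp i).1).mp hinf (x i) (hx i)
    rw [real_inner_comm]
    exact this
  have hsum_nonneg : 0 ≤ ∑ i, ω i * Metric.infDist a (C i) ^ 2 :=
    Finset.sum_nonneg fun i _ => mul_nonneg (hω i).le (sq_nonneg _)
  have hinner_le : wInner ω (fun i => x i - p i) (fun i => a - p i) ≤ 0 :=
    Finset.sum_nonpos fun i _ => mul_nonpos_of_nonneg_of_nonpos (hω i).le (hip i)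
  have hmain : ∑ i, ω i * Metric.infDist a (C i) ^ 2
      = distDsq ω x - wNormSq ω (fun i => x i - p i)
        + 2 * wInner ω (fun i => x i - p i) (fun i => a - p i) := by
    rw [distDsq_eq ω  hω hωsum x, ← ha]
    simp only [wNormSq, wInner, Finset.mul_sum]
    rw [← Finset.sum_sub_distrib, ← Finset.sum_add_distrib]
    apply Finset.sum_congr rfl
    intro i _
    rw [hdist i, key_identity (x i) (p i) a]
    ring
  have hnn : 0 ≤ wNormSq ω (fun i => x i - p i) :=
    Finset.sum_nonneg fun i _ => mul_nonneg (hω i).le (sq_nonneg _)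
  refine ⟨hmain, hinner_le, hsum_nonneg, ?_⟩
  rw [hmain]
  linarith
end

section
/- Let f : H → ℝ, λ ≥ 0, (C_i)_{i=1}^m nonempty compact convex subsets of H with nonempty intersection, and F_λ(𝐱) = f(A𝐱) + (λ/2)dist_D²(𝐱). Then inf_{x ∈ ⋂_i C_i} f(x) ≥ inf_{𝐱 ∈ ∏_i C_i} F_λ(𝐱) ≥ inf_{x ∈ Σ_i ω_i C_i} f(x), where Σ_i ω_i C_i is the weighted Minkowski sum. -/
open Filter Topology Metric

lemma distDsq_nonneg {H : Type*} [NormedAddCommGroup H] [InnerProductSpace ℝ H]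
    {m : ℕ} (ω : Fin m → ℝ) (x : Fin m → H) : 0 ≤ distDsq ω x := sq_nonneg _

lemma distDsq_const {H : Type*} [NormedAddCommGroup H] [InnerProductSpace ℝ H]
    {m : ℕ} (ω : Fin m → ℝ) (x : H) : distDsq ω (fun _ => x) = 0 := by
  have h : (⨅ z : H, Real.sqrt (wNormSq ω (fun _ => x - z))) = 0 := by
    apply le_antisymm
    · have := ciInf_le (f := fun z : H => Real.sqrt (wNormSq ω (fun _ => x - z)))
        ⟨0, fun a ⟨z, hz⟩ => hz ▸ Real.sqrt_nonneg _⟩ x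
      simpa [wNormSq] using this
    · exact le_ciInf fun z => Real.sqrt_nonneg _
  simp [distDsq, h]

lemma avgW_const {H : Type*} [NormedAddCommGroup H] [InnerProductSpace ℝ H]
    {m : ℕ} {ω : Fin m → ℝ} (hωsum : ∑ i, ω i = 1) (x : H) :
    avgW ω (fun _ => x) = x := by
  rw [avgW, ← Finset.sum_smul, hωsum, one_smul]

/-- Proposition 2.10: the optimal value of the penalized product-space problem is sandwiched
between the optimal value over the intersection and the optimal value over the weighted
Minkowski sum `Σᵢ ωᵢ Cᵢ = A(∏ᵢ Cᵢ)`: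
`inf_{⋂Cᵢ} f ≥ inf_{∏Cᵢ} F_λ ≥ inf_{ΣωᵢCᵢ} f`. -/
theorem F_value_sandwich {H : Type*} [NormedAddCommGroup H] [InnerProductSpace ℝ H]
    {m : ℕ} (ω : Fin m → ℝ) (hω : ∀ i, 0 < ω i) (hωsum : ∑ i, ω i = 1)
    (f : H → ℝ) (hf : Continuous f) (lam : ℝ) (hlam : 0 ≤ lam)
    (C : Fin m → Set H) (hCne : ∀ i, (C i).Nonempty)
    (hCc : ∀ i, IsCompact (C i)) (hCv : ∀ i, Convex ℝ (C i))
    (hint : (⋂ i, C i).Nonempty) :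
    sInf (f '' ⋂ i, C i)
        ≥ sInf ((fun x => f (avgW ω x) + lam / 2 * distDsq ω x) '' prodSet C) ∧
    sInf ((fun x => f (avgW ω x) + lam / 2 * distDsq ω x) '' prodSet C)
        ≥ sInf (f '' (avgW ω '' prodSet C)) := by
  set F : (Fin m → H) → ℝ := fun x => f (avgW ω x) + lam / 2 * distDsq ω x with hF
  have hprod_eq : prodSet C = Set.pi Set.univ C := by
    ext x; simp [prodSet, Set.mem_pi]
  have hprodc : IsCompact (prodSet C) := by
    rw [hprod_eq]; exact isCompact_univ_pi hCc
  have hprodne : (prodSet C).Nonempty := ⟨fun i => (hCne i).choose, fun i => (hCne i).choose_spec⟩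
  have havgc : Continuous (avgW ω : (Fin m → H) → H) := by
    unfold avgW
    exact continuous_finset_sum _ fun i _ => (continuous_apply i).const_smul _
  have hKc : IsCompact (avgW ω '' prodSet C) := hprodc.image havgc
  have hKne : (avgW ω '' prodSet C).Nonempty := hprodne.image _
  have hfKc : IsCompact (f '' (avgW ω '' prodSet C)) := hKc.image hf
  have hfKbdd : BddBelow (f '' (avgW ω '' prodSet C)) := hfKc.bddBelow
  have hfKne : (f '' (avgW ω '' prodSet C)).Nonempty := hKne.image _
  -- key pointwise bound: F x ≥ f (avgW ω x) ≥ sInf (f '' avg '' prod)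
  have hptwise : ∀ x ∈ prodSet C, sInf (f '' (avgW ω '' prodSet C)) ≤ F x := by
    intro x hx
    have h1 : sInf (f '' (avgW ω '' prodSet C)) ≤ f (avgW ω x) :=
      csInf_le hfKbdd ⟨avgW ω x, ⟨x, hx, rfl⟩, rfl⟩
    have h2 : 0 ≤ lam / 2 * distDsq ω x :=
      mul_nonneg (by linarith) (distDsq_nonneg ω x)
    calc sInf (f '' (avgW ω '' prodSet C)) ≤ f (avgW ω x) := h1
      _ ≤ F x := by simp [hF]; linarith
  have hFbdd : BddBelow (F '' prodSet C) := by
    refine ⟨sInf (f '' (avgW ω '' prodSet C)), ?_⟩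
    rintro a ⟨x, hx, rfl⟩
    exact hptwise x hx
  constructor
  · refine le_csInf (hint.image f) ?_
    rintro b ⟨x, hx, rfl⟩
    have hxi : ∀ i, x ∈ C i := by simpa [Set.mem_iInter] using hx
    have hmem : (fun _ : Fin m => x) ∈ prodSet C := fun i => hxi i
    have : sInf (F '' prodSet C) ≤ F (fun _ => x) :=
      csInf_le hFbdd ⟨(fun _ => x), hmem, rfl⟩
    calc sInf (F '' prodSet C) ≤ F (fun _ => x) := this
      _ = f x := by simp [hF, avgW_const hωsum, distDsq_const]
  · refine le_csInf (hprodne.image F) ?_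
    rintro b ⟨x, hx, rfl⟩
    exact hptwise x hx
end

section
/- Suppose λ_t ↗ +∞. Then lim_{t→∞} inf_{𝐱 ∈ ∏_i C_i} [f(A𝐱) + (λ_t/2)dist_D²(𝐱)] = inf_{x ∈ ⋂_i C_i} f(x); i.e., the optimal values of the penalized subproblems converge to the optimal value of the intersection-constrained problem. -/
open Filter Topology Metric

theorem distDsq_eq_aux {H : Type*} [NormedAddCommGroup H] [InnerProductSpace ℝ H]
    {m : ℕ} (ω : Fin m → ℝ) (hω : ∀ i, 0 ≤ ω i) (hωsum : ∑ i, ω i = 1)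
    (x : Fin m → H) :
    distDsq ω x = wNormSq ω (fun i => x i - avgW ω x) := by
  set c := avgW ω x with hc
  have hV0 : 0 ≤ wNormSq ω (fun i => x i - c) :=
    Finset.sum_nonneg fun i _ => mul_nonneg (hω i) (by positivity)
  have hsum0 : ∑ i, ω i • (x i - c) = 0 := by
    simp only [smul_sub, Finset.sum_sub_distrib, ← Finset.sum_smul, hωsum, one_smul]
    simp [hc, avgW]
  have key : ∀ z : H, wNormSq ω (fun i => x i - z)
      = wNormSq ω (fun i => x i - c) + ‖c - z‖ ^ 2 := by
    intro z
    have expand : ∀ i, ‖x i - z‖ ^ 2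
        = ‖x i - c‖ ^ 2 + 2 * (inner ℝ (x i - c) (c - z) : ℝ) + ‖c - z‖ ^ 2 := by
      intro i
      have : x i - z = (x i - c) + (c - z) := by abel
      rw [this, norm_add_sq_real]
    have hcross : ∑ i, ω i * (inner ℝ (x i - c) (c - z) : ℝ) = 0 := by
      have : ∑ i, ω i * (inner ℝ (x i - c) (c - z) : ℝ)
          = (inner ℝ (∑ i, ω i • (x i - c)) (c - z) : ℝ) := by
        rw [sum_inner]
        exact Finset.sum_congr rfl fun i _ => (real_inner_smul_left _ _ _).symm
      rw [this, hsum0, inner_zero_left]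
    simp only [wNormSq, expand, mul_add]
    rw [Finset.sum_add_distrib, Finset.sum_add_distrib, ← Finset.sum_mul, hωsum, one_mul]
    have : ∑ i, ω i * (2 * (inner ℝ (x i - c) (c - z) : ℝ))
        = 2 * ∑ i, ω i * (inner ℝ (x i - c) (c - z) : ℝ) := by
      rw [Finset.mul_sum]; exact Finset.sum_congr rfl fun i _ => by ring
    rw [this, hcross]
    ring
  have hbdd : BddBelow (Set.range fun z : H => Real.sqrt (wNormSq ω (fun i => x i - z))) :=
    ⟨0, by rintro y ⟨z, rfl⟩; exact Real.sqrt_nonneg _⟩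
  have hinf : (⨅ z : H, Real.sqrt (wNormSq ω (fun i => x i - z)))
      = Real.sqrt (wNormSq ω (fun i => x i - c)) := by
    apply le_antisymm
    · exact ciInf_le hbdd c
    · refine le_ciInf fun z => ?_
      rw [key z]
      exact Real.sqrt_le_sqrt (le_add_of_nonneg_right (by positivity))
  rw [distDsq, hinf, Real.sq_sqrt hV0]


/-- Proposition 2.15: if `λ_t ↗ +∞`, the optimal values of the penalized subproblems
converge to the optimal value of the intersection-constrained problem:
`inf_{∏Cᵢ} F_{λ_t} → inf_{⋂Cᵢ} f`. -/
theorem penalized_values_converge {H : Type*} [NormedAddCommGroup H]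
    [InnerProductSpace ℝ H] [CompleteSpace H] {m : ℕ}
    (ω : Fin m → ℝ) (hω : ∀ i, 0 < ω i) (hωsum : ∑ i, ω i = 1)
    (f : H → ℝ) (hf : Continuous f)
    (C : Fin m → Set H) (hCne : ∀ i, (C i).Nonempty)
    (hCc : ∀ i, IsCompact (C i)) (hCv : ∀ i, Convex ℝ (C i))
    (hint : (⋂ i, C i).Nonempty)
    (lam : ℕ → ℝ) (hmono : StrictMono lam) (hlam0 : 0 ≤ lam 0)
    (hlam : Tendsto lam atTop atTop) :
    Tendsto
      (fun t => sInf ((fun x => f (avgW ω x) + lam t / 2 * distDsq ω x) '' prodSet C))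
      atTop (𝓝 (sInf (f '' ⋂ i, C i))) := by
  have hm : Nonempty (Fin m) := by
    rcases Nat.eq_zero_or_pos m with h | h
    · subst h; simp at hωsum
    · exact ⟨⟨0, h⟩⟩
  -- basic objects
  set V : (Fin m → H) → ℝ := fun x => wNormSq ω (fun i => x i - avgW ω x) with hVdef
  have hdist : ∀ x : Fin m → H, distDsq ω x = V x :=
    distDsq_eq_aux ω (fun i => (hω i).le) hωsum
  have hVnonneg : ∀ x, 0 ≤ V x := fun x =>
    Finset.sum_nonneg fun i _ => mul_nonneg (hω i).le (by positivity)
  have havg : Continuous (fun x : Fin m → H => avgW ω x) := by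
    apply continuous_finset_sum
    exact fun i _ => (continuous_apply i).const_smul (ω i)
  have hVcont : Continuous V := by
    apply continuous_finset_sum
    intro i _
    exact continuous_const.mul ((((continuous_apply i).sub havg).norm).pow 2)
  have havgconst : ∀ z : H, avgW ω (fun _ => z) = z := by
    intro z
    simp only [avgW, ← Finset.sum_smul, hωsum, one_smul]
  set g : (Fin m → H) → ℝ := fun x => f (avgW ω x) with hgdef
  have hg : Continuous g := hf.comp havg
  set K : Set (Fin m → H) := prodSet C with hKdef
  have hK : IsCompact K := by
    have : K = Set.pi Set.univ C := by
      ext x; simp [prodSet, Set.mem_pi, hKdef]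
    rw [this]
    exact isCompact_univ_pi hCc
  have hKne : K.Nonempty := ⟨fun i => (hCne i).some, fun i => (hCne i).some_mem⟩
  set S : Set H := ⋂ i, C i with hSdef
  have hS : IsCompact S := (hCc hm.some).of_isClosed_subset
      (isClosed_iInter fun i => (hCc i).isClosed) (Set.iInter_subset _ hm.some)
  set L : ℝ := sInf (f '' S) with hLdef
  have hLbdd : BddBelow (f '' S) := (hS.image hf).bddBelow
  have hSne : (f '' S).Nonempty := hint.image f
  set F : ℕ → (Fin m → H) → ℝ := fun t x => g x + lam t / 2 * V x with hFdef
  have hFcont : ∀ t, Continuous (F t) := fun t =>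
    hg.add (continuous_const.mul hVcont)
  have hlamnn : ∀ t, 0 ≤ lam t := fun t => hlam0.trans (hmono.monotone (Nat.zero_le t))
  set I : ℕ → ℝ := fun t => sInf (F t '' K) with hIdef
  have hbddF : ∀ t, BddBelow (F t '' K) := fun t => ((hK.image (hFcont t)).bddBelow)
  have hFne : ∀ t, (F t '' K).Nonempty := fun t => hKne.image _
  -- minimizers
  have hmin : ∀ t, ∃ x ∈ K, IsMinOn (F t) K x := fun t =>
    hK.exists_isMinOn hKne (hFcont t).continuousOn
  choose xt hxtK hxtmin using hmin
  have hIt : ∀ t, I t = F t (xt t) := by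
    intro t
    refine le_antisymm (csInf_le (hbddF t) ⟨xt t, hxtK t, rfl⟩) ?_
    refine le_csInf (hFne t) ?_
    rintro y ⟨x, hx, rfl⟩
    exact hxtmin t hx
  -- upper bound I t ≤ L
  have hIleL : ∀ t, I t ≤ L := by
    intro t
    refine le_csInf hSne ?_
    rintro y ⟨z, hz, rfl⟩
    have hzK : (fun _ : Fin m => z) ∈ K := by
      intro i
      exact Set.mem_iInter.mp hz i
    have hval : F t (fun _ => z) = f z := by
      have hV0 : V (fun _ : Fin m => z) = 0 := by
        simp [hVdef, wNormSq, havgconst z]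
      simp [hFdef, hgdef, hV0, havgconst z]
    calc I t ≤ F t (fun _ => z) := csInf_le (hbddF t) ⟨_, hzK, rfl⟩
    _ = f z := hval
  -- monotonicity of I
  have hImono : Monotone I := by
    intro s t hst
    refine le_csInf (hFne t) ?_
    rintro y ⟨x, hx, rfl⟩
    have h1 : F s x ≤ F t x := by
      have : lam s / 2 * V x ≤ lam t / 2 * V x := by
        apply mul_le_mul_of_nonneg_right _ (hVnonneg x)
        have := hmono.monotone hst
        linarith
      simp only [hFdef]
      linarith
    exact (csInf_le (hbddF s) ⟨x, hx, rfl⟩).trans h1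
  have hIbddAbove : BddAbove (Set.range I) := ⟨L, by rintro y ⟨t, rfl⟩; exact hIleL t⟩
  set l : ℝ := ⨆ t, I t with hldef
  have htends : Tendsto I atTop (𝓝 l) := tendsto_atTop_ciSup hImono hIbddAbove
  have hlleL : l ≤ L := ciSup_le hIleL
  -- lower bound for g on K
  set B : ℝ := sInf (g '' K) with hBdef
  have hB : ∀ x ∈ K, B ≤ g x := fun x hx => csInf_le ((hK.image hg).bddBelow) ⟨x, hx, rfl⟩
  -- penalty bound
  have hpen : ∀ t, lam t / 2 * V (xt t) ≤ L - B := by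
    intro t
    have h1 : g (xt t) + lam t / 2 * V (xt t) ≤ L := by
      calc g (xt t) + lam t / 2 * V (xt t) = F t (xt t) := rfl
      _ = I t := (hIt t).symm
      _ ≤ L := hIleL t
    have h2 := hB (xt t) (hxtK t)
    linarith
  -- V (xt t) → 0
  have hVlim : Tendsto (fun t => V (xt t)) atTop (𝓝 0) := by
    have hub : Tendsto (fun t => 2 * (L - B) / lam t) atTop (𝓝 0) :=
      Tendsto.div_atTop tendsto_const_nhds hlam
    refine squeeze_zero' (Eventually.of_forall fun t => hVnonneg (xt t)) ?_ hub
    filter_upwards [hlam.eventually_ge_atTop 1] with t ht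
    rw [le_div_iff₀ (by linarith : (0:ℝ) < lam t)]
    nlinarith [hpen t]
  -- subsequence converging
  obtain ⟨xs, hxsK, φ, hφ, hconv⟩ := hK.tendsto_subseq hxtK
  have hVxs : V xs = 0 := by
    have h1 : Tendsto (fun k => V (xt (φ k))) atTop (𝓝 (V xs)) :=
      (hVcont.tendsto xs).comp hconv
    have h2 : Tendsto (fun k => V (xt (φ k))) atTop (𝓝 0) :=
      hVlim.comp hφ.tendsto_atTop
    exact tendsto_nhds_unique h1 h2
  have hdiag : ∀ i, xs i = avgW ω xs := by
    intro i
    have hterms := (Finset.sum_eq_zero_iff_of_nonneg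
      (fun i _ => mul_nonneg (hω i).le (by positivity : (0:ℝ) ≤ ‖xs i - avgW ω xs‖ ^ 2))).mp hVxs
    have := hterms i (Finset.mem_univ i)
    have hn : ‖xs i - avgW ω xs‖ ^ 2 = 0 := by
      rcases mul_eq_zero.mp this with h | h
      · exact absurd h (ne_of_gt (hω i))
      · exact h
    have : ‖xs i - avgW ω xs‖ = 0 := by
      nlinarith [norm_nonneg (xs i - avgW ω xs)]
    rw [norm_eq_zero, sub_eq_zero] at this
    exact this
  have hmemS : avgW ω xs ∈ S := by
    refine Set.mem_iInter.mpr fun i => ?_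
    rw [← hdiag i]
    exact hxsK i
  have hLlef : L ≤ f (avgW ω xs) := csInf_le hLbdd ⟨_, hmemS, rfl⟩
  have hfleℓ : f (avgW ω xs) ≤ l := by
    have hgle : ∀ k, g (xt (φ k)) ≤ l := by
      intro k
      have h1 : g (xt (φ k)) ≤ F (φ k) (xt (φ k)) := by
        have : 0 ≤ lam (φ k) / 2 * V (xt (φ k)) :=
          mul_nonneg (by linarith [hlamnn (φ k)]) (hVnonneg _)
        simp only [hFdef]
        linarith
      calc g (xt (φ k)) ≤ F (φ k) (xt (φ k)) := h1
      _ = I (φ k) := (hIt (φ k)).symm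
      _ ≤ l := le_ciSup hIbddAbove (φ k)
    have hgt : Tendsto (fun k => g (xt (φ k))) atTop (𝓝 (g xs)) :=
      (hg.tendsto xs).comp hconv
    exact le_of_tendsto hgt (Eventually.of_forall hgle)
  have hlL : l = L := le_antisymm hlleL (hLlef.trans hfleℓ)
  have : (fun t => sInf ((fun x => f (avgW ω x) + lam t / 2 * distDsq ω x) '' prodSet C)) = I := by
    funext t
    simp only [hIdef, hFdef, hgdef, hKdef]
    congr 1
    ext y
    constructor
    · rintro ⟨x, hx, rfl⟩; exact ⟨x, hx, by simp only [hdist]⟩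
    · rintro ⟨x, hx, rfl⟩; exact ⟨x, hx, by simp only [hdist]⟩
  rw [this, ← hlL]
  exact htends
end

section
/- Let f be Fréchet differentiable with ‖∇f(A𝐱)‖ ≤ β_f for all 𝐱 ∈ ∏_i C_i, let (C_i) be nonempty compact convex with diameters R_i and ⋂_i C_i ≠ ∅, and let F_λ(𝐱) = f(A𝐱) + (λ/2)dist_D²(𝐱). Then for every 𝐱 ∈ ∏_i C_i and every λ ≥ 0: sup_{𝐯 ∈ ∏C_i}⟨∇F_λ(𝐱), 𝐱 − 𝐯⟩ ≥ sup_{v ∈ ⋂C_i}⟨∇f(A𝐱), A𝐱 − v⟩ + λ·dist_D²(𝐱) ≥ −β_f·Σ_i ω_i R_i. -/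
open Filter Topology Metric

/-- Lemma 3.4: for `𝐱 ∈ ∏ᵢ Cᵢ` and any `λ ≥ 0`, the Frank–Wolfe gap of the penalized
subproblem bounds from above both the F-W gap of the original problem at `A𝐱` plus the
penalty `λ·dist_D²(𝐱)`, which in turn is at least `−β_f·Σᵢ ωᵢ Rᵢ`, where `β_f` bounds
`‖∇f(A𝐱)‖` over `∏ᵢ Cᵢ` and `Rᵢ = diam Cᵢ`. -/
theorem fw_gap_lower_bound {H : Type*} [NormedAddCommGroup H] [InnerProductSpace ℝ H]
    [CompleteSpace H] {m : ℕ}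
    (ω : Fin m → ℝ) (hω : ∀ i, 0 < ω i) (hωsum : ∑ i, ω i = 1)
    (f : H → ℝ) (f' : H → H) (hf : ∀ x, HasGradientAt f (f' x) x)
    (C : Fin m → Set H) (hCne : ∀ i, (C i).Nonempty)
    (hCc : ∀ i, IsCompact (C i)) (hCv : ∀ i, Convex ℝ (C i))
    (hint : (⋂ i, C i).Nonempty)
    (R : Fin m → ℝ) (hR : ∀ i, R i = Metric.diam (C i))
    (βf : ℝ) (hβ : ∀ x ∈ prodSet C, ‖f' (avgW ω x)‖ ≤ βf)
    (lam : ℝ) (hlam : 0 ≤ lam)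
    (x : Fin m → H) (hx : x ∈ prodSet C) :
    sSup ((fun v : Fin m → H =>
          wInner ω (fun i => f' (avgW ω x) + lam • (x i - avgW ω x))
            (fun i => x i - v i)) '' prodSet C)
      ≥ sSup ((fun v : H => (inner ℝ (f' (avgW ω x)) (avgW ω x - v) : ℝ)) '' ⋂ i, C i)
          + lam * distDsq ω x ∧
    sSup ((fun v : H => (inner ℝ (f' (avgW ω x)) (avgW ω x - v) : ℝ)) '' ⋂ i, C i)
        + lam * distDsq ω x
      ≥ -(βf * ∑ i, ω i * R i) := by
  classical
  have hm : m ≠ 0 := by rintro rfl; simp at hωsum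
  set u := avgW ω x with hu
  set g := f' u with hg
  set S := ∑ i, ω i * ‖x i - u‖ ^ 2 with hS
  obtain ⟨v0, hv0⟩ := hint
  have hv0i : ∀ i, v0 ∈ C i := by simpa [Set.mem_iInter] using hv0
  have hSnn : 0 ≤ S := Finset.sum_nonneg fun i _ => mul_nonneg (hω i).le (by positivity)
  -- centering identity
  have hcenter : (∑ i, ω i • (x i - u)) = 0 := by
    simp only [smul_sub, Finset.sum_sub_distrib, ← Finset.sum_smul, hωsum, one_smul]
    simp [hu, avgW]
  have hcenter' : ∀ w : H, ∑ i, ω i * (inner ℝ (x i - u) w : ℝ) = 0 := by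
    intro w
    have : ∀ i ∈ Finset.univ, ω i * (inner ℝ (x i - u) w : ℝ) = inner ℝ (ω i • (x i - u)) w := by
      intro i _; rw [real_inner_smul_left]
    rw [Finset.sum_congr rfl this, ← sum_inner, hcenter, inner_zero_left]
  have havg : ∀ v : H, (∑ i, ω i • (x i - v)) = u - v := by
    intro v
    simp only [smul_sub, Finset.sum_sub_distrib, ← Finset.sum_smul, hωsum, one_smul]
    rfl
  -- distDsq bounds
  have hd_nonneg : 0 ≤ distDsq ω x := sq_nonneg _
  have hd_le : distDsq ω x ≤ S := by
    have hbdd : BddBelow (Set.range fun z : H => Real.sqrt (wNormSq ω (fun i => x i - z))) :=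
      ⟨0, by rintro r ⟨z, rfl⟩; exact Real.sqrt_nonneg _⟩
    have h1 : (⨅ z : H, Real.sqrt (wNormSq ω (fun i => x i - z))) ≤ Real.sqrt S := by
      have := ciInf_le hbdd u
      simpa [wNormSq, hS] using this
    have h0 : 0 ≤ ⨅ z : H, Real.sqrt (wNormSq ω (fun i => x i - z)) :=
      le_ciInf fun z => Real.sqrt_nonneg _
    calc distDsq ω x = (⨅ z : H, Real.sqrt (wNormSq ω (fun i => x i - z))) ^ 2 := rfl
      _ ≤ Real.sqrt S ^ 2 := by gcongr
      _ = S := Real.sq_sqrt hSnn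
  -- value of the product-gap function at diagonal points
  have hval : ∀ v : H, wInner ω (fun i => g + lam • (x i - u)) (fun i => x i - v)
      = (inner ℝ g (u - v) : ℝ) + lam * S := by
    intro v
    have step : ∀ i ∈ Finset.univ, ω i * (inner ℝ (g + lam • (x i - u)) (x i - v) : ℝ)
        = ω i * (inner ℝ g (x i - v) : ℝ)
          + lam * (ω i * ‖x i - u‖ ^ 2) + lam * (ω i * (inner ℝ (x i - u) (u - v) : ℝ)) := by
      intro i _
      have hxv : x i - v = (x i - u) + (u - v) := by abel
      rw [inner_add_left, real_inner_smul_left]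
      nth_rewrite 2 [hxv]
      rw [inner_add_right, real_inner_self_eq_norm_sq]
      ring
    rw [wInner, Finset.sum_congr rfl step]
    rw [Finset.sum_add_distrib, Finset.sum_add_distrib, ← Finset.mul_sum, ← Finset.mul_sum,
      hcenter', mul_zero, add_zero, ← hS]
    congr 1
    have : ∀ i ∈ Finset.univ, ω i * (inner ℝ g (x i - v) : ℝ) = inner ℝ g (ω i • (x i - v)) := by
      intro i _; rw [real_inner_smul_right]
    rw [Finset.sum_congr rfl this, ← inner_sum, havg]
  -- compactness / boundedness
  have hprod_compact : IsCompact (prodSet C) := by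
    have : prodSet C = Set.pi Set.univ C := by ext y; simp [prodSet, Set.mem_pi]
    rw [this]; exact isCompact_univ_pi hCc
  have hA_bdd : BddAbove ((fun v : Fin m → H =>
      wInner ω (fun i => g + lam • (x i - u)) (fun i => x i - v i)) '' prodSet C) := by
    have hcont : Continuous (fun v : Fin m → H =>
        wInner ω (fun i => g + lam • (x i - u)) (fun i => x i - v i)) := by
      apply continuous_finset_sum
      intro i _
      exact continuous_const.mul
        (Continuous.inner continuous_const (continuous_const.sub (continuous_apply i)))
    exact (hprod_compact.image hcont).bddAbove
  have i0 : Fin m := ⟨0, Nat.pos_of_ne_zero hm⟩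
  have hinter_compact : IsCompact (⋂ i, C i) :=
    (hCc i0).of_isClosed_subset (isClosed_iInter fun i => (hCc i).isClosed)
      (Set.iInter_subset _ i0)
  have hB_bdd : BddAbove ((fun v : H => (inner ℝ g (u - v) : ℝ)) '' ⋂ i, C i) := by
    have hcont : Continuous (fun v : H => (inner ℝ g (u - v) : ℝ)) :=
      Continuous.inner continuous_const (continuous_const.sub continuous_id)
    exact (hinter_compact.image hcont).bddAbove
  -- each diagonal value is below sSup A
  have hdiag_le : ∀ v ∈ ⋂ i, C i, (inner ℝ g (u - v) : ℝ) + lam * S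
      ≤ sSup ((fun v : Fin m → H =>
        wInner ω (fun i => g + lam • (x i - u)) (fun i => x i - v i)) '' prodSet C) := by
    intro v hv
    have hvmem : (fun _ : Fin m => v) ∈ prodSet C := fun i => by
      exact Set.mem_iInter.mp hv i
    have := le_csSup hA_bdd (Set.mem_image_of_mem _ hvmem)
    rw [hval v] at this
    exact this
  constructor
  · -- first inequality
    have hBne : ((fun v : H => (inner ℝ g (u - v) : ℝ)) '' ⋂ i, C i).Nonempty :=
      ⟨_, Set.mem_image_of_mem _ hv0⟩
    have h1 : sSup ((fun v : H => (inner ℝ g (u - v) : ℝ)) '' ⋂ i, C i)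
        ≤ sSup ((fun v : Fin m → H =>
          wInner ω (fun i => g + lam • (x i - u)) (fun i => x i - v i)) '' prodSet C)
          - lam * distDsq ω x := by
      apply csSup_le hBne
      rintro b ⟨v, hv, rfl⟩
      have h2 := hdiag_le v hv
      have h3 : lam * distDsq ω x ≤ lam * S := mul_le_mul_of_nonneg_left hd_le hlam
      linarith
    linarith
  · -- second inequality
    have hgβ : ‖g‖ ≤ βf := hβ x hx
    have hβnn : 0 ≤ βf := le_trans (norm_nonneg _) hgβ
    have hterm : ∀ i, -(βf * (ω i * R i)) ≤ ω i * (inner ℝ g (x i - v0) : ℝ) := by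
      intro i
      have h1 : |(inner ℝ g (x i - v0) : ℝ)| ≤ ‖g‖ * ‖x i - v0‖ := abs_real_inner_le_norm _ _
      have h2 : ‖x i - v0‖ ≤ R i := by
        rw [hR i, ← dist_eq_norm]
        exact dist_le_diam_of_mem (hCc i).isBounded (hx i) (hv0i i)
      have h3 : ‖g‖ * ‖x i - v0‖ ≤ βf * R i :=
        mul_le_mul hgβ h2 (norm_nonneg _) hβnn
      have h4 : -(βf * R i) ≤ (inner ℝ g (x i - v0) : ℝ) := by
        have := neg_abs_le (inner ℝ g (x i - v0) : ℝ)
        linarith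
      have h5 := mul_le_mul_of_nonneg_left h4 (hω i).le
      calc -(βf * (ω i * R i)) = ω i * -(βf * R i) := by ring
        _ ≤ ω i * (inner ℝ g (x i - v0) : ℝ) := h5
    have hinner0 : -(βf * ∑ i, ω i * R i) ≤ (inner ℝ g (u - v0) : ℝ) := by
      have hsum : ∑ i, ω i * (inner ℝ g (x i - v0) : ℝ) = (inner ℝ g (u - v0) : ℝ) := by
        have : ∀ i ∈ Finset.univ, ω i * (inner ℝ g (x i - v0) : ℝ)
            = inner ℝ g (ω i • (x i - v0)) := by intro i _; rw [real_inner_smul_right]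
        rw [Finset.sum_congr rfl this, ← inner_sum, havg]
      calc -(βf * ∑ i, ω i * R i) = ∑ i, -(βf * (ω i * R i)) := by
            simp [Finset.mul_sum]
        _ ≤ ∑ i, ω i * (inner ℝ g (x i - v0) : ℝ) :=
            Finset.sum_le_sum fun i _ => hterm i
        _ = (inner ℝ g (u - v0) : ℝ) := hsum
    have hle : (inner ℝ g (u - v0) : ℝ)
        ≤ sSup ((fun v : H => (inner ℝ g (u - v) : ℝ)) '' ⋂ i, C i) :=
      le_csSup hB_bdd (Set.mem_image_of_mem _ hv0)
    have hld : 0 ≤ lam * distDsq ω x := mul_nonneg hlam hd_nonneg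
    linarith
end
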